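/- There exists an integer s₀ such that for all integers s ≥ s₀ and all integers t with 2s ≤ t ≤ 2.08s the following hold. (i) If t = 2r+1 is odd, let R' be the weighted graph on r+1 vertices containing two disjoint edges of weight 1/2 with all other edge weights equal to 1, where the four vertices incident to the weight-1/2 edges each have weight 3/(4r) and the remaining r−3 vertices each have weight 1/r; then R' is 𝒦_t-free and d_{K_s}(R') > d_{K_s}(K_r^w). (ii) If t = 2r is even, let R₂ be the weighted graph on r+1 vertices containing three disjoint edges of weight 1/2 with all other edge weights equal to 1, where the six vertices incident to the weight-1/2 edges each have weight 5/(6r) and the remaining r−5 vertices each have weight 1/r; then R₂ is 𝒦_t-free and d_{K_s}(R₂) > d_{K_s}(R₁) for every weighted graph R₁ on r vertices whose edge weights are all 1 except for exactly one edge of weight 1/2. -/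

import Mathlib

open Filter

structure WeightedGraph (V : Type) [Fintype V] where
  vw : V → ℝ
  ew : V → V → ℝ
  vw_nonneg : ∀ v, 0 ≤ vw v
  vw_le_one : ∀ v, vw v ≤ 1
  vw_sum : ∑ v, vw v = 1
  ew_nonneg : ∀ u v, 0 ≤ ew u v
  ew_le_one : ∀ u v, ew u v ≤ 1
  ew_symm : ∀ u v, ew u v = ew v u
  ew_self : ∀ v, ew v v = 0

namespace WeightedGraph

variable {V : Type} [Fintype V]

/-- The `K_m`-density of a weighted graph. -/
noncomputable def density (R : WeightedGraph V) (m : ℕ) : ℝ :=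
  ∑ σ : Fin m → V, (∏ i, R.vw (σ i)) *
    ∏ p ∈ Finset.univ.filter (fun p : Fin m × Fin m => p.1 < p.2), R.ew (σ p.1) (σ p.2)

/-- The simple graph `R_{>α}` of edges of weight greater than `α`. -/
def gtGraph (R : WeightedGraph V) (α : ℝ) : SimpleGraph V where
  Adj u v := u ≠ v ∧ α < R.ew u v
  symm := by
    constructor
    intro u v h
    refine ⟨h.1.symm, ?_⟩
    rw [R.ew_symm v u]
    exact h.2
  loopless := by constructor; intro v h; exact h.1 rfl

/-- `R` is `𝒦_t`-free. -/
def KtFree (R : WeightedGraph V) (t : ℕ) : Prop :=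
  ¬ ∃ S₁ S₂ : Finset V, S₂ ⊆ S₁ ∧ 1 ≤ S₂.card ∧ S₁.card + S₂.card = t ∧
      (R.gtGraph 0).IsClique (S₁ : Set V) ∧ (R.gtGraph (1/2)).IsClique (S₂ : Set V)

/-- The conditions (A1)–(A5) on a partition function `part`, for a `(b,a)`-partition
with the number of parts `a` implicit in the type of `part`. -/
def IsBAPartition (R : WeightedGraph V) (s : ℕ) {a : ℕ} (part : V → Fin a) : Prop :=
  Function.Surjective part ∧
  (∀ u v : V, u ≠ v → R.ew u v = 1/2 ∨ R.ew u v = 1) ∧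
  (∀ u v : V, u ≠ v → (R.ew u v = 1/2 ↔ part u = part v)) ∧
  (∀ u v : V, part u = part v → R.vw u = R.vw v) ∧
  (∀ i j : Fin a, (Finset.univ.filter fun x => part x = i).card ≤
      (Finset.univ.filter fun x => part x = j).card + 1) ∧
  (∀ u v : V, (Finset.univ.filter fun x => part x = part v).card ≤
      (Finset.univ.filter fun x => part x = part u).card → R.vw u ≤ R.vw v) ∧
  ((a = 1 ∧ ∀ i : Fin a, (Finset.univ.filter fun x => part x = i).card = s) ∨
   (2 ≤ a ∧ ∀ i : Fin a, (Finset.univ.filter fun x => part x = i).card ≤ s - 1))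

/-- `R` admits a `(b,a)`-partition (with clique parameter `s`). -/
def AdmitsPartition (R : WeightedGraph V) (s b a : ℕ) : Prop :=
  Fintype.card V = b ∧ 1 ≤ a ∧ ∃ part : V → Fin a, R.IsBAPartition s part

end WeightedGraph

/-- `π_s(𝒦_t)`: the supremum of the `K_s`-density over all `𝒦_t`-free weighted graphs. -/
noncomputable def piSup (s t : ℕ) : ℝ :=
  sSup {x : ℝ | ∃ (V : Type) (_ : Fintype V) (R : WeightedGraph V),
    R.KtFree t ∧ R.density s = x}

/-- The independence number of a simple graph. -/
noncomputable def indepNum {α : Type*} (G : SimpleGraph α) : ℕ :=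
  sSup {k : ℕ | ∃ S : Finset α, (Gᶜ).IsNClique k S}

/-- The number `N(K_s, G)` of `s`-cliques of `G`. -/
noncomputable def cliqueCount {α : Type*} (G : SimpleGraph α) (s : ℕ) : ℕ :=
  Set.ncard {S : Finset α | G.IsNClique s S}

/-- The Ramsey–Turán number `RT(n, K_s, K_t, ℓ)`. -/
noncomputable def RT (n s t : ℕ) (ℓ : ℝ) : ℕ :=
  sSup {N : ℕ | ∃ G : SimpleGraph (Fin n),
    G.CliqueFree t ∧ ((indepNum G : ℝ) < ℓ) ∧ N = cliqueCount G s}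
/-- The complete balanced weighted graph `K_r^w`: `r` vertices of weight `1/r` each,
and every edge of weight `1`. -/
noncomputable def completeBalanced (r : ℕ) (hr : 0 < r) : WeightedGraph (Fin r) where
  vw := fun _ => 1 / (r : ℝ)
  ew u v := if u = v then 0 else 1
  vw_nonneg v := by positivity
  vw_le_one v := by
    apply div_le_one_of_le₀
    · exact_mod_cast hr
    · positivity
  vw_sum := by
    have : (r : ℝ) ≠ 0 := by exact_mod_cast hr.ne'
    simp [Finset.sum_const, Finset.card_univ, this]
  ew_nonneg u v := by (try dsimp only); split <;> norm_num
  ew_le_one u v := by (try dsimp only); split <;> norm_num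
  ew_symm u v := by
    try dsimp only
    rcases eq_or_ne u v with h | h
    · simp [h]
    · rw [if_neg h, if_neg (Ne.symm h)]
  ew_self v := by simp
/-- `R` contains `k` pairwise-disjoint edges of weight `1/2` (with endpoints `e₁ i, e₂ i`),
all other edges have weight `1`, the `2k` matched vertices have weight `wA` each, and
every other vertex has weight `1/r`. -/
def MatchedHalfEdges {V : Type} [Fintype V] (R : WeightedGraph V)
    (k : ℕ) (wA : ℝ) (r : ℕ) : Prop :=
  ∃ e₁ e₂ : Fin k → V,
    Function.Injective (Sum.elim e₁ e₂) ∧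
    (∀ i : Fin k, R.ew (e₁ i) (e₂ i) = 1/2) ∧
    (∀ u v : V, u ≠ v →
      (∀ i : Fin k, ¬(u = e₁ i ∧ v = e₂ i) ∧ ¬(u = e₂ i ∧ v = e₁ i)) → R.ew u v = 1) ∧
    (∀ i : Fin k, R.vw (e₁ i) = wA ∧ R.vw (e₂ i) = wA) ∧
    (∀ v : V, (∀ i : Fin k, v ≠ e₁ i ∧ v ≠ e₂ i) → R.vw v = 1 / (r : ℝ))

/-- All edge weights of `R` equal `1` except for exactly one edge of weight `1/2`. -/
def OneHalfEdge {V : Type} [Fintype V] (R : WeightedGraph V) : Prop :=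
  ∃ u v : V, u ≠ v ∧ R.ew u v = 1/2 ∧
    ∀ x y : V, x ≠ y → ¬(x = u ∧ y = v) → ¬(x = v ∧ y = u) → R.ew x y = 1

/-!
The `K_s`-density of a weighted graph is `s!` times the sum over `s`-sets `S` of the product of
the vertex weights in `S` and the edge weights inside `S`. Bounding the edge weights by `1` leaves
the elementary symmetric function `e_s` of the vertex weights, and smoothing two unequal vertex
weights towards their mean never decreases `e_s`; hence every weighted graph on `n` vertices has
`K_s`-density at most `s! C(n, s) / n^s`, the density of `K_n^w`.

In a graph on `r + 1` vertices with `k` disjoint half-edges, grouping the `s`-sets by their trace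
on the `2k` matched vertices gives the density `s! / r^s · ∑_j a_j C(N, s - j)` with
`N = r + 1 - 2k`, while Vandermonde gives `C(r, s) = ∑_j C(2k - 1, j) C(N, s - j)`. Only the
coefficient of `C(N, s - 2k)` is larger in the first sum, and it wins: `t ≤ 2.08 s` forces
`r ≤ 1.04 s`, so the ratios `C(N, m + 1) / C(N, m) = (N - m) / (m + 1)` are at most `1/20`.

A clique of `R_{>1/2}` contains at most one endpoint of each half-edge, so
`|S₁| + |S₂| ≤ 2(r + 1) - k < t`.
-/

open Finset
open scoped Nat

namespace Multiset

variable {R : Type*}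

theorem esymm_cons_succ [CommSemiring R] (a : R) (t : Multiset R) (n : ℕ) :
    (a ::ₘ t).esymm (n + 1) = t.esymm (n + 1) + a * t.esymm n := by
  simp [esymm, powersetCard_cons, map_map, sum_map_mul_left]

theorem esymm_replicate [CommSemiring R] (k : ℕ) (a : R) (n : ℕ) :
    (replicate k a).esymm n = k.choose n * a ^ n := by
  rw [← card_range k, ← map_const', ← Finset.range_val, Finset.esymm_map_val,
    Finset.sum_congr rfl fun u hu => by rw [prod_const, (Finset.mem_powersetCard.1 hu).2]]
  simp

theorem esymm_nonneg [CommSemiring R] [PartialOrder R] [IsOrderedRing R] {t : Multiset R}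
    (ht : ∀ x ∈ t, 0 ≤ x) (n : ℕ) : 0 ≤ t.esymm n :=
  sum_nonneg fun _ hx => by
    obtain ⟨u, hu, rfl⟩ := mem_map.1 hx
    exact prod_nonneg fun x hx => ht x (mem_of_le (mem_powersetCard.1 hu).1 hx)

theorem esymm_cons_cons_le {a b a' b' : ℝ} {t : Multiset ℝ} (ht : ∀ x ∈ t, 0 ≤ x)
    (hsum : a + b = a' + b') (hprod : a * b ≤ a' * b') (n : ℕ) :
    (a ::ₘ b ::ₘ t).esymm n ≤ (a' ::ₘ b' ::ₘ t).esymm n := by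
  rcases n with _ | _ | n
  · simp [esymm]
  · simp [esymm]
    linarith
  · have h₂ := mul_le_mul_of_nonneg_right hprod (esymm_nonneg ht n)
    simp only [esymm_cons_succ]
    linear_combination (t.esymm (n + 1)) * hsum + h₂

theorem exists_lt_and_exists_gt_of_sum_eq {m : Multiset ℝ} {μ : ℝ} (hμ : m.sum = card m * μ)
    (hne : ∃ x ∈ m, x ≠ μ) : (∃ a ∈ m, a < μ) ∧ ∃ b ∈ m, μ < b := by
  obtain ⟨x, hx, hxμ⟩ := hne
  obtain ⟨t, rfl⟩ := exists_cons_of_mem hx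
  simp only [sum_cons, card_cons, Nat.cast_add, Nat.cast_one] at hμ
  constructor
  · by_contra! h
    have hx := h x (mem_cons_self x t)
    have ht := card_nsmul_le_sum (s := t) fun y hy => h y (mem_cons_of_mem hy)
    rw [nsmul_eq_mul] at ht
    exact hxμ (by linarith)
  · by_contra! h
    have hx := h x (mem_cons_self x t)
    have ht := sum_le_card_nsmul t μ fun y hy => h y (mem_cons_of_mem hy)
    rw [nsmul_eq_mul] at ht
    exact hxμ (by linarith)

theorem esymm_le_choose_mul_pow {m : Multiset ℝ} (hm : ∀ x ∈ m, 0 ≤ x) {μ : ℝ}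
    (hμ : m.sum = card m * μ) (n : ℕ) : m.esymm n ≤ (card m).choose n * μ ^ n := by
  induction hd : card (m.filter (· ≠ μ)) using Nat.strong_induction_on generalizing m with
  | _ d ih =>
  by_cases hall : ∀ x ∈ m, x = μ
  · rw [eq_replicate_card.2 hall, esymm_replicate, card_replicate]
  obtain ⟨⟨a, ha, haμ⟩, b, hb, hbμ⟩ :=
    exists_lt_and_exists_gt_of_sum_eq hμ (by simpa using hall)
  obtain ⟨t, rfl⟩ : ∃ t, m = a ::ₘ b ::ₘ t := by
    obtain ⟨u, rfl⟩ := exists_cons_of_mem ha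
    obtain ⟨t, rfl⟩ := exists_cons_of_mem ((mem_cons.1 hb).resolve_left (by linarith))
    exact ⟨t, rfl⟩
  have ht : ∀ x ∈ t, 0 ≤ x := fun x hx => hm x (by simp [hx])
  have ha₀ := hm a (mem_cons_self a _)
  -- Smoothing `a < μ < b` to `μ, a + b - μ` keeps the sum, does not decrease the product and
  -- creates one more entry equal to `μ`.
  set m' := μ ::ₘ (a + b - μ) ::ₘ t
  have hm' : ∀ x ∈ m', 0 ≤ x := by
    simp only [m', mem_cons, forall_eq_or_imp]
    exact ⟨by linarith, by linarith, ht⟩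
  have hμ' : m'.sum = card m' * μ := by
    simp only [m', sum_cons, card_cons] at hμ ⊢
    push_cast at hμ ⊢
    linarith
  have hd' : card (m'.filter (· ≠ μ)) < d := by
    subst hd
    simp only [m', filter_cons, haμ.ne, hbμ.ne', ne_eq, not_false_eq_true, if_true,
      not_true_eq_false, if_false]
    split_ifs <;> simp
  calc (a ::ₘ b ::ₘ t).esymm n
      ≤ m'.esymm n := esymm_cons_cons_le ht (by ring) (by nlinarith) n
    _ ≤ (card m').choose n * μ ^ n := ih _ hd' hm' hμ' rfl
    _ = (card (a ::ₘ b ::ₘ t)).choose n * μ ^ n := by simp [m']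

end Multiset

theorem Finset.prod_filter_lt_eq_prod_sym2_image {V M : Type*} [DecidableEq V] [CommMonoid M]
    {s : ℕ} (f : V → V → M) (hf : ∀ u v, f u v = f v u) {σ : Fin s → V}
    (hσ : Function.Injective σ) :
    ∏ p ∈ univ.filter (fun p : Fin s × Fin s => p.1 < p.2), f (σ p.1) (σ p.2) =
      ∏ e ∈ (univ.image σ).sym2 with ¬ e.IsDiag, Sym2.lift ⟨f, hf⟩ e := by
  refine prod_bij (fun p _ => s(σ p.1, σ p.2)) ?_ ?_ ?_ (fun _ _ => rfl)
  · intro p hp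
    simp only [mem_filter, mem_univ, true_and] at hp
    simp [hσ.eq_iff, hp.ne]
  · rintro ⟨a₁, a₂⟩ ha ⟨b₁, b₂⟩ hb h
    simp only [mem_filter, mem_univ, true_and] at ha hb
    rcases Sym2.eq_iff.1 h with ⟨h₁, h₂⟩ | ⟨h₁, h₂⟩
    · exact Prod.ext (hσ h₁) (hσ h₂)
    · exact absurd (ha.trans_eq (hσ h₂)) (hb.trans_eq (hσ h₁).symm).not_gt
  · intro e he
    induction e using Sym2.ind with | h x y =>
    simp only [mem_filter, mk_mem_sym2_iff, mem_image, mem_univ, true_and,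
      Sym2.mk_isDiag_iff] at he
    obtain ⟨⟨⟨i, rfl⟩, ⟨j, rfl⟩⟩, hij⟩ := he
    rcases lt_or_gt_of_ne (ne_of_apply_ne σ hij) with h | h
    · exact ⟨(i, j), by simpa using h, rfl⟩
    · exact ⟨(j, i), by simpa using h, Sym2.eq_swap⟩

theorem Finset.card_filter_injective_image_eq {V : Type*} [Fintype V] [DecidableEq V] {s : ℕ}
    {S : Finset V} (hS : #S = s) :
    #{σ : Fin s → V | σ.Injective ∧ univ.image σ = S} = s ! := by
  rw [← Fintype.card_subtype]
  let e : {σ : Fin s → V // σ.Injective ∧ univ.image σ = S} ≃ (Fin s ↪ S) :=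
    { toFun := fun σ =>
        ⟨fun i => ⟨σ.1 i, congrArg (σ.1 i ∈ ·) σ.2.2 ▸ mem_image_of_mem σ.1 (mem_univ i)⟩,
          fun i j h => σ.2.1 (congrArg Subtype.val h)⟩
      invFun := fun τ => ⟨fun i => τ i, Subtype.val_injective.comp τ.injective,
        eq_of_subset_of_card_le (by simp [subset_iff])
          (by rw [hS, card_image_of_injective (f := fun i => (τ i : V)) univ
            (Subtype.val_injective.comp τ.injective), card_univ, Fintype.card_fin])⟩
      left_inv := fun _ => rfl
      right_inv := fun _ => rfl }
  rw [Fintype.card_congr e, Fintype.card_embedding_eq, Fintype.card_fin, Fintype.card_coe, hS,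
    Nat.descFactorial_self]

theorem Finset.sum_filter_injective_image_eq_factorial_smul {V M : Type*} [Fintype V]
    [DecidableEq V] [AddCommMonoid M] (g : Finset V → M) (s : ℕ) :
    ∑ σ : Fin s → V with σ.Injective, g (univ.image σ) =
      s ! • ∑ S ∈ powersetCard s univ, g S := by
  rw [← sum_fiberwise_of_maps_to (g := fun σ => univ.image σ) (t := powersetCard s univ),
    smul_sum]
  · refine sum_congr rfl fun S hS => ?_
    rw [sum_congr rfl fun σ hσ => by rw [(mem_filter.1 hσ).2], sum_const, filter_filter,
      card_filter_injective_image_eq (mem_powersetCard.1 hS).2]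
  · intro σ hσ
    simp [mem_powersetCard, card_image_of_injective _ (mem_filter.1 hσ).2]

theorem Finset.card_filter_powersetCard_inter_eq {V : Type*} [Fintype V] [DecidableEq V]
    {A T : Finset V} {s : ℕ} (hTA : T ⊆ A) (hTs : #T ≤ s) :
    #{S ∈ powersetCard s univ | S ∩ A = T} = (Fintype.card V - #A).choose (s - #T) := by
  rw [← card_univ, ← card_sdiff_of_subset (subset_univ A), ← card_powersetCard]
  refine card_nbij' (· \ A) (· ∪ T) ?_ ?_ ?_ ?_ <;> intro S hS <;>
    simp only [coe_filter, mem_powersetCard, subset_univ, true_and, mem_coe,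
      Set.mem_ofPred_eq] at hS ⊢
  · obtain ⟨rfl, rfl⟩ := hS
    exact ⟨sdiff_subset_sdiff (subset_univ S) le_rfl, by grind [card_sdiff_add_card_inter]⟩
  · have hST : Disjoint S T := disjoint_of_subset_right hTA (subset_sdiff.1 hS.1).2
    refine ⟨by rw [card_union_of_disjoint hST]; omega, ?_⟩
    grind
  · rw [← hS.2, sdiff_union_inter]
  · grind

theorem Finset.sum_powersetCard_inter_eq {V M : Type*} [Fintype V] [DecidableEq V]
    [AddCommMonoid M] {A : Finset V} {s : ℕ} (hA : #A ≤ s) (f : Finset V → M) :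
    ∑ S ∈ powersetCard s univ, f (S ∩ A) =
      ∑ T ∈ A.powerset, (Fintype.card V - #A).choose (s - #T) • f T := by
  rw [← sum_fiberwise_of_maps_to (g := (· ∩ A)) (t := A.powerset) (by simp)]
  refine sum_congr rfl fun T hT => ?_
  have hTA := mem_powerset.1 hT
  rw [sum_congr rfl fun S hS => by rw [(mem_filter.1 hS).2], sum_const,
    card_filter_powersetCard_inter_eq hTA ((card_le_card hTA).trans hA)]

namespace WeightedGraph

variable {V : Type} [Fintype V]

def edgeWeight (R : WeightedGraph V) : Sym2 V → ℝ := Sym2.lift ⟨R.ew, R.ew_symm⟩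

theorem edgeWeight_nonneg (R : WeightedGraph V) (e : Sym2 V) : 0 ≤ R.edgeWeight e := by
  induction e using Sym2.ind with | h u v => exact R.ew_nonneg u v

theorem edgeWeight_le_one (R : WeightedGraph V) (e : Sym2 V) : R.edgeWeight e ≤ 1 := by
  induction e using Sym2.ind with | h u v => exact R.ew_le_one u v

section DecidableEq

variable [DecidableEq V]

def cliqueWeight (R : WeightedGraph V) (S : Finset V) : ℝ :=
  (∏ v ∈ S, R.vw v) * ∏ e ∈ S.sym2 with ¬ e.IsDiag, R.edgeWeight e

theorem cliqueWeight_le_prod (R : WeightedGraph V) (S : Finset V) :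
    R.cliqueWeight S ≤ ∏ v ∈ S, R.vw v :=
  mul_le_of_le_one_right (prod_nonneg fun v _ => R.vw_nonneg v)
    (prod_le_one (fun e _ => R.edgeWeight_nonneg e) fun e _ => R.edgeWeight_le_one e)

theorem density_eq_factorial_mul_sum_cliqueWeight (R : WeightedGraph V) (s : ℕ) :
    R.density s = s ! * ∑ S ∈ powersetCard s univ, R.cliqueWeight S := by
  have hinj : ∀ σ : Fin s → V, (∏ i, R.vw (σ i)) * ∏ p : Fin s × Fin s with p.1 < p.2,
      R.ew (σ p.1) (σ p.2) ≠ 0 → σ.Injective := by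
    intro σ hσ i j hij
    by_contra hne
    refine hσ (mul_eq_zero_of_right _ (prod_eq_zero (i := (min i j, max i j)) ?_ ?_))
    · simpa [eq_comm] using hne
    · rcases le_total i j with h | h <;> simp [h, hij, R.ew_self]
  rw [density, ← sum_filter_of_ne fun σ _ => hinj σ, ← nsmul_eq_mul,
    ← sum_filter_injective_image_eq_factorial_smul]
  refine sum_congr rfl fun σ hσ => ?_
  have hσ : σ.Injective := (mem_filter.1 hσ).2
  rw [cliqueWeight, prod_image hσ.injOn, edgeWeight, prod_filter_lt_eq_prod_sym2_image _ _ hσ]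

end DecidableEq

theorem density_le_factorial_div_pow_mul_choose (R : WeightedGraph V) (s : ℕ) :
    R.density s ≤ s ! / Fintype.card V ^ s * (Fintype.card V).choose s := by
  classical
  have hV : (Fintype.card V : ℝ) ≠ 0 := by
    have : Nonempty V := by
      by_contra h
      simpa [not_nonempty_iff.1 h] using R.vw_sum
    exact Nat.cast_ne_zero.2 Fintype.card_ne_zero
  have hsum : (univ.val.map R.vw).sum =
      Multiset.card (univ.val.map R.vw) * (1 / Fintype.card V) := by
    rw [Multiset.card_map, card_val, card_univ, mul_one_div_cancel hV]
    exact R.vw_sum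
  calc R.density s ≤ s ! * (univ.val.map R.vw).esymm s := by
        rw [density_eq_factorial_mul_sum_cliqueWeight, esymm_map_val]
        gcongr with S
        exact R.cliqueWeight_le_prod S
    _ ≤ s ! * ((Fintype.card V).choose s * (1 / Fintype.card V) ^ s) := by
        gcongr
        simpa using Multiset.esymm_le_choose_mul_pow (by simpa using R.vw_nonneg) hsum s
    _ = _ := by rw [one_div_pow]; ring

end WeightedGraph

def pairCount {k : ℕ} (B : Finset (Fin k ⊕ Fin k)) : ℕ :=
  #{ℓ | Sum.inl ℓ ∈ B ∧ Sum.inr ℓ ∈ B}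

-- Each pair contributes none, one or both of its endpoints, so the multiplicities are the
-- coefficients of `(1 + 2x + x²y)^k`.
theorem sum_pairCount_two (F : ℕ → ℕ → ℝ) :
    ∑ B : Finset (Fin 2 ⊕ Fin 2), F #B (pairCount B) =
      F 0 0 + 4 * F 1 0 + 4 * F 2 0 + 2 * F 2 1 + 4 * F 3 1 + F 4 2 := by
  have h : univ.val.map (fun B : Finset (Fin 2 ⊕ Fin 2) => (#B, pairCount B)) =
      {(0, 0)} + .replicate 4 (1, 0) + .replicate 4 (2, 0) + .replicate 2 (2, 1) +
        .replicate 4 (3, 1) + {(4, 2)} := by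
    decide
  have hF := congrArg (fun M => (M.map fun p => F p.1 p.2).sum) h
  simp only [Multiset.map_map, Function.comp_def] at hF
  rw [sum_eq_multiset_sum, hF]
  simp
  ring

theorem sum_pairCount_three (F : ℕ → ℕ → ℝ) :
    ∑ B : Finset (Fin 3 ⊕ Fin 3), F #B (pairCount B) =
      F 0 0 + 6 * F 1 0 + 12 * F 2 0 + 3 * F 2 1 + 8 * F 3 0 + 12 * F 3 1 + 12 * F 4 1 +
        3 * F 4 2 + 6 * F 5 2 + F 6 3 := by
  have h : univ.val.map (fun B : Finset (Fin 3 ⊕ Fin 3) => (#B, pairCount B)) =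
      {(0, 0)} + .replicate 6 (1, 0) + .replicate 12 (2, 0) + .replicate 3 (2, 1) +
        .replicate 8 (3, 0) + .replicate 12 (3, 1) + .replicate 12 (4, 1) +
        .replicate 3 (4, 2) + .replicate 6 (5, 2) + {(6, 3)} := by
    decide
  have hF := congrArg (fun M => (M.map fun p => F p.1 p.2).sum) h
  simp only [Multiset.map_map, Function.comp_def] at hF
  rw [sum_eq_multiset_sum, hF]
  simp
  ring

namespace WeightedGraph

variable {V : Type} [Fintype V] {R : WeightedGraph V} {k r : ℕ}

theorem ktFree_of_matchedHalfEdges {t : ℕ} {wA : ℝ} (hR : MatchedHalfEdges R k wA r)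
    (ht : 2 * Fintype.card V < t + k) : R.KtFree t := by
  classical
  obtain ⟨e₁, e₂, hinj, hhalf, -⟩ := hR
  obtain ⟨he₁, he₂, he₁₂⟩ := Sum.elim_injective.1 hinj
  rintro ⟨S₁, S₂, -, -, hcard, -, hS₂⟩
  let f : Fin k → V := fun ℓ => if e₁ ℓ ∈ S₂ then e₂ ℓ else e₁ ℓ
  have hf : ∀ ℓ, f ℓ ∉ S₂ := by
    intro ℓ
    by_cases h₁ : e₁ ℓ ∈ S₂
    · intro h₂
      simp only [f, if_pos h₁] at h₂
      have := (hS₂ h₁ h₂ (he₁₂ ℓ ℓ)).2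
      rw [hhalf ℓ] at this
      exact lt_irrefl _ this
    · simp [f, h₁]
  have hfinj : f.Injective := by
    intro a b hab
    simp only [f] at hab
    split_ifs at hab
    exacts [he₂ hab, absurd hab.symm (he₁₂ _ _), absurd hab (he₁₂ _ _), he₁ hab]
  have hdisj : Disjoint (univ.image f) S₂ := disjoint_left.2 fun v hv => by
    obtain ⟨ℓ, -, rfl⟩ := mem_image.1 hv
    exact hf ℓ
  have := card_le_univ (univ.image f ∪ S₂)
  rw [card_union_of_disjoint hdisj, card_image_of_injective _ hfinj, card_univ,
    Fintype.card_fin] at this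
  have := card_le_univ S₁
  omega

section DecidableEq

variable [DecidableEq V] {wA : ℝ} {e₁ e₂ : Fin k → V}

theorem prod_vw_eq_of_matched (hwA : ∀ i, R.vw (e₁ i) = wA ∧ R.vw (e₂ i) = wA)
    (hwr : ∀ v, (∀ i, v ≠ e₁ i ∧ v ≠ e₂ i) → R.vw v = 1 / r) (S : Finset V) :
    ∏ v ∈ S, R.vw v = wA ^ #(S ∩ univ.image (Sum.elim e₁ e₂)) *
      (1 / r) ^ #(S \ univ.image (Sum.elim e₁ e₂)) := by
  rw [← prod_inter_mul_prod_sdiff S (univ.image (Sum.elim e₁ e₂))]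
  congr 1 <;> refine prod_eq_pow_card fun v hv => ?_
  · obtain ⟨x, -, rfl⟩ := mem_image.1 (mem_inter.1 hv).2
    rcases x with i | i
    exacts [(hwA i).1, (hwA i).2]
  · have hv : ∀ x, Sum.elim e₁ e₂ x ≠ v := by simpa using (mem_sdiff.1 hv).2
    exact hwr v fun i => ⟨(hv (.inl i)).symm, (hv (.inr i)).symm⟩

theorem prod_edgeWeight_eq_of_matched (hinj : (Sum.elim e₁ e₂).Injective)
    (hhalf : ∀ i, R.ew (e₁ i) (e₂ i) = 1 / 2)
    (hone : ∀ u v, u ≠ v → (∀ i, ¬(u = e₁ i ∧ v = e₂ i) ∧ ¬(u = e₂ i ∧ v = e₁ i)) →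
      R.ew u v = 1)
    (S : Finset V) :
    ∏ e ∈ S.sym2 with ¬ e.IsDiag, R.edgeWeight e =
      (1 / 2) ^ #{ℓ | e₁ ℓ ∈ S ∧ e₂ ℓ ∈ S} := by
  obtain ⟨he₁, -, he₁₂⟩ := Sum.elim_injective.1 hinj
  set M := univ.image fun ℓ => s(e₁ ℓ, e₂ ℓ)
  have hM : ∀ e ∈ {e ∈ S.sym2 | ¬ e.IsDiag},
      R.edgeWeight e = if e ∈ M then 1 / 2 else 1 := by
    intro e he
    induction e using Sym2.ind with | h u v =>
    have huv : u ≠ v := by simpa using (mem_filter.1 he).2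
    split_ifs with h
    · obtain ⟨ℓ, -, hℓ⟩ := mem_image.1 h
      rw [← hℓ]
      exact hhalf ℓ
    · refine hone u v huv fun ℓ => ⟨?_, ?_⟩ <;> rintro ⟨rfl, rfl⟩ <;>
        refine h (mem_image.2 ⟨ℓ, mem_univ _, ?_⟩)
      exacts [rfl, Sym2.eq_swap]
  have hpair : (fun ℓ => s(e₁ ℓ, e₂ ℓ)).Injective := by
    intro a b hab
    rcases Sym2.eq_iff.1 hab with ⟨h, -⟩ | ⟨h, -⟩
    exacts [he₁ h, absurd h (he₁₂ a b)]
  rw [prod_congr rfl hM, prod_ite_mem, prod_const, ← card_image_of_injective _ hpair]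
  congr 2
  ext e
  simp only [M, mem_inter, mem_filter, mem_image, mem_univ, true_and]
  constructor
  · rintro ⟨⟨he, -⟩, ℓ, rfl⟩
    exact ⟨ℓ, by simpa using he, rfl⟩
  · rintro ⟨ℓ, hℓ, rfl⟩
    exact ⟨⟨by simpa using hℓ, by simpa using he₁₂ ℓ ℓ⟩, ℓ, rfl⟩

theorem density_eq_of_matchedHalfEdges {c : ℝ} (hR : MatchedHalfEdges R k (c / r) r) {s : ℕ}
    (hks : 2 * k ≤ s) :
    R.density s = s ! / r ^ s * ∑ B : Finset (Fin k ⊕ Fin k),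
      (Fintype.card V - 2 * k).choose (s - #B) * (c ^ #B * (1 / 2) ^ pairCount B) := by
  obtain ⟨e₁, e₂, hinj, hhalf, hone, hwA, hwr⟩ := hR
  set A := univ.image (Sum.elim e₁ e₂)
  have hA : #A = 2 * k := by
    rw [card_image_of_injective _ hinj, card_univ, Fintype.card_sum, Fintype.card_fin, two_mul]
  let f : Finset V → ℝ := fun T =>
    (c / r) ^ #T * (1 / r) ^ (s - #T) * (1 / 2) ^ #{ℓ | e₁ ℓ ∈ T ∧ e₂ ℓ ∈ T}
  have hw : ∀ S ∈ powersetCard s univ, R.cliqueWeight S = f (S ∩ A) := by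
    intro S hS
    have hSA : #(S \ A) = s - #(S ∩ A) := by
      rw [← (mem_powersetCard.1 hS).2, ← card_sdiff_add_card_inter S A, Nat.add_sub_cancel]
    have hpairs : ∀ ℓ, e₁ ℓ ∈ S ∧ e₂ ℓ ∈ S ↔ e₁ ℓ ∈ S ∩ A ∧ e₂ ℓ ∈ S ∩ A := fun ℓ => by
      have : e₁ ℓ ∈ A ∧ e₂ ℓ ∈ A := ⟨mem_image_of_mem _ (mem_univ (Sum.inl ℓ)),
        mem_image_of_mem _ (mem_univ (Sum.inr ℓ))⟩
      simp [this]
    rw [cliqueWeight, prod_vw_eq_of_matched hwA hwr, prod_edgeWeight_eq_of_matched hinj hhalf hone,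
      hSA, filter_congr fun ℓ _ => hpairs ℓ]
  rw [density_eq_factorial_mul_sum_cliqueWeight, sum_congr rfl hw, sum_powersetCard_inter_eq
    (hA.trans_le hks), hA, powerset_image, sum_image (image_injective hinj).injOn, powerset_univ]
  simp_rw [mul_sum]
  refine sum_congr rfl fun B _ => ?_
  have hmem : ∀ ℓ, (e₁ ℓ ∈ B.image (Sum.elim e₁ e₂) ↔ .inl ℓ ∈ B) ∧
      (e₂ ℓ ∈ B.image (Sum.elim e₁ e₂) ↔ .inr ℓ ∈ B) := fun ℓ =>
    ⟨hinj.mem_finset_image (a := .inl ℓ), hinj.mem_finset_image (a := .inr ℓ)⟩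
  have hB : #B ≤ s := (card_le_univ B).trans (by simpa [two_mul] using hks)
  simp only [f, card_image_of_injective _ hinj, pairCount, hmem, nsmul_eq_mul]
  rw [div_pow, one_div_pow, div_mul_div_comm, mul_one, ← pow_add, Nat.add_sub_cancel' hB]
  ring

end DecidableEq

theorem density_eq_of_matchedHalfEdges_two {N m : ℕ} (hV : Fintype.card V = N + 4)
    (hR : MatchedHalfEdges R 2 (3 / 4 / r) r) :
    R.density (m + 4) = (m + 4)! / r ^ (m + 4) * (N.choose (m + 4) + 3 * N.choose (m + 3) +
      45 / 16 * N.choose (m + 2) + 27 / 32 * N.choose (m + 1) + 81 / 1024 * N.choose m) := by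
  classical
  rw [density_eq_of_matchedHalfEdges hR (by omega), hV,
    sum_pairCount_two fun j p =>
      ((N + 4 - 2 * 2).choose (m + 4 - j) : ℝ) * ((3 / 4) ^ j * (1 / 2) ^ p)]
  congr 1
  norm_num [Nat.add_sub_assoc]
  ring

theorem density_eq_of_matchedHalfEdges_three {N m : ℕ} (hV : Fintype.card V = N + 6)
    (hR : MatchedHalfEdges R 3 (5 / 6 / r) r) :
    R.density (m + 6) = (m + 6)! / r ^ (m + 6) * (N.choose (m + 6) + 5 * N.choose (m + 5) +
      75 / 8 * N.choose (m + 4) + 875 / 108 * N.choose (m + 3) +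
      5625 / 1728 * N.choose (m + 2) + 3125 / 5184 * N.choose (m + 1) +
      15625 / 373248 * N.choose m) := by
  classical
  rw [density_eq_of_matchedHalfEdges hR (by omega), hV,
    sum_pairCount_three fun j p =>
      ((N + 6 - 2 * 3).choose (m + 6 - j) : ℝ) * ((5 / 6) ^ j * (1 / 2) ^ p)]
  congr 1
  norm_num [Nat.add_sub_assoc]
  ring

end WeightedGraph

theorem Nat.mul_choose_succ_le {n k q : ℕ} (h : q * (n - k) ≤ k + 1) :
    q * n.choose (k + 1) ≤ n.choose k := by
  refine Nat.le_of_mul_le_mul_right ?_ k.succ_pos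
  calc q * n.choose (k + 1) * (k + 1) = n.choose k * (q * (n - k)) := by
        rw [mul_assoc, Nat.choose_succ_right_eq]; ring
    _ ≤ n.choose k * (k + 1) := Nat.mul_le_mul_left _ h

theorem choose_add_three_lt {N m : ℕ} (hmN : m ≤ N) (hq : 20 * (N - m) ≤ m + 1) :
    ((N + 3).choose (m + 4) : ℝ) < N.choose (m + 4) + 3 * N.choose (m + 3) +
      45 / 16 * N.choose (m + 2) + 27 / 32 * N.choose (m + 1) + 81 / 1024 * N.choose m := by
  have hratio : ∀ k, 20 * (N - k) ≤ k + 1 → (20 : ℝ) * N.choose (k + 1) ≤ N.choose k :=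
    fun k hk => by exact_mod_cast Nat.mul_choose_succ_le hk
  have hpos : (1 : ℝ) ≤ N.choose m := by exact_mod_cast Nat.choose_pos hmN
  have hpascal : (N + 3).choose (m + 4) =
      N.choose (m + 4) + 3 * N.choose (m + 3) + 3 * N.choose (m + 2) + N.choose (m + 1) := by
    simp only [Nat.choose_succ_succ']
    ring
  rw [hpascal]
  push_cast
  linarith [hratio m hq, hratio (m + 1) (by omega)]

theorem choose_add_five_lt {N m : ℕ} (hmN : m ≤ N) (hq : 20 * (N - m) ≤ m + 1) :
    ((N + 5).choose (m + 6) : ℝ) < N.choose (m + 6) + 5 * N.choose (m + 5) +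
      75 / 8 * N.choose (m + 4) + 875 / 108 * N.choose (m + 3) +
      5625 / 1728 * N.choose (m + 2) + 3125 / 5184 * N.choose (m + 1) +
      15625 / 373248 * N.choose m := by
  have hratio : ∀ k, 20 * (N - k) ≤ k + 1 → (20 : ℝ) * N.choose (k + 1) ≤ N.choose k :=
    fun k hk => by exact_mod_cast Nat.mul_choose_succ_le hk
  have hpos : (1 : ℝ) ≤ N.choose m := by exact_mod_cast Nat.choose_pos hmN
  have hpascal : (N + 5).choose (m + 6) =
      N.choose (m + 6) + 5 * N.choose (m + 5) + 10 * N.choose (m + 4) + 10 * N.choose (m + 3) +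
        5 * N.choose (m + 2) + N.choose (m + 1) := by
    simp only [Nat.choose_succ_succ']
    ring
  rw [hpascal]
  push_cast
  linarith [hratio m hq, hratio (m + 1) (by omega), hratio (m + 2) (by omega),
    hratio (m + 3) (by omega)]

namespace WeightedGraph

variable {V : Type} [Fintype V] {R : WeightedGraph V} {r s : ℕ}

theorem factorial_div_pow_mul_choose_lt_density_of_matchedHalfEdges_two
    (hR : MatchedHalfEdges R 2 (3 / (4 * r)) r) (hV : Fintype.card V = r + 1) (hs : 65 ≤ s)
    (hsr : s ≤ r) (hrs : 25 * (2 * r + 1) ≤ 52 * s) :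
    s ! / r ^ s * r.choose s < R.density s := by
  obtain ⟨m, rfl⟩ : ∃ m, s = m + 4 := ⟨s - 4, by omega⟩
  obtain ⟨N, rfl⟩ : ∃ N, r = N + 3 := ⟨r - 3, by omega⟩
  rw [density_eq_of_matchedHalfEdges_two (N := N) (by omega) (by rwa [div_div])]
  exact mul_lt_mul_of_pos_left (choose_add_three_lt (by omega) (by omega)) (by positivity)

theorem factorial_div_pow_mul_choose_lt_density_of_matchedHalfEdges_three
    (hR : MatchedHalfEdges R 3 (5 / (6 * r)) r) (hV : Fintype.card V = r + 1) (hs : 125 ≤ s)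
    (hsr : s ≤ r) (hrs : 25 * (2 * r) ≤ 52 * s) :
    s ! / r ^ s * r.choose s < R.density s := by
  obtain ⟨m, rfl⟩ : ∃ m, s = m + 6 := ⟨s - 6, by omega⟩
  obtain ⟨N, rfl⟩ : ∃ N, r = N + 5 := ⟨r - 5, by omega⟩
  rw [density_eq_of_matchedHalfEdges_three (N := N) (by omega) (by rwa [div_div])]
  exact mul_lt_mul_of_pos_left (choose_add_five_lt (by omega) (by omega)) (by positivity)

end WeightedGraph

theorem conjecture_false_for_large_s :
    ∃ s₀ : ℕ, ∀ s : ℕ, s₀ ≤ s → ∀ t : ℕ, 2 * s ≤ t → (t : ℝ) ≤ 2.08 * (s : ℝ) →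
      (∀ r : ℕ, t = 2 * r + 1 → ∀ hr : 0 < r,
        ∀ R' : WeightedGraph (Fin (r + 1)),
          MatchedHalfEdges R' 2 (3 / (4 * (r : ℝ))) r →
          R'.KtFree t ∧ (completeBalanced r hr).density s < R'.density s) ∧
      (∀ r : ℕ, t = 2 * r →
        ∀ R₂ : WeightedGraph (Fin (r + 1)),
          MatchedHalfEdges R₂ 3 (5 / (6 * (r : ℝ))) r →
          R₂.KtFree t ∧
          ∀ (W : Type) (_ : Fintype W) (R₁ : WeightedGraph W),
            Fintype.card W = r → OneHalfEdge R₁ →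
              R₁.density s < R₂.density s) := by
  refine ⟨125, fun s hs t hst ht => ?_⟩
  have hts : 25 * t ≤ 52 * s := by exact_mod_cast (by linarith : (25 * t : ℝ) ≤ 52 * s)
  constructor
  · rintro r rfl hr R' hR'
    refine ⟨WeightedGraph.ktFree_of_matchedHalfEdges hR' (by simp; omega), ?_⟩
    calc (completeBalanced r hr).density s ≤ s ! / r ^ s * r.choose s := by
          simpa using (completeBalanced r hr).density_le_factorial_div_pow_mul_choose s
      _ < R'.density s :=
          WeightedGraph.factorial_div_pow_mul_choose_lt_density_of_matchedHalfEdges_two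
            hR' (by simp) (by omega) (by omega) hts
  · rintro r rfl R₂ hR₂
    refine ⟨WeightedGraph.ktFree_of_matchedHalfEdges hR₂ (by simp; omega),
      fun W _ R₁ hW _ => ?_⟩
    calc R₁.density s ≤ s ! / r ^ s * r.choose s := by
          simpa [hW] using R₁.density_le_factorial_div_pow_mul_choose s
      _ < R₂.density s :=
          WeightedGraph.factorial_div_pow_mul_choose_lt_density_of_matchedHalfEdges_three
            hR₂ (by simp) hs (by omega) hts
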